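/- arXiv:1906.08296 — 3 statements merged into one kernel-verified Lean document; each statement's English description precedes it below -/
import Mathlib

section
/- Let U and V be independent real-valued random variables with joint law P and true AUC θ* = P(U > V). For each m, n let U_1,…,U_m and V_1,…,V_n be i.i.d. copies of U and V respectively, all mutually independent, let θ̂_{m,n} = (mn)^{-1} Σ_{i=1}^m Σ_{j=1}^n 1(U_i > V_j) be the Mann–Whitney statistic, and let Π_{m,n} be the Gibbs posterior with flat prior and fixed learning rate ω > 0, i.e. the probability measure on [0,1] with density proportional to θ ↦ exp(−ω m n (θ − θ̂_{m,n})²). Assume without loss of generality n = m ∧ n and m, n → ∞. Then for any sequence K_n → ∞, the random variable Π_{m,n}({θ ∈ [0,1] : |θ − θ*| > K_n (m ∧ n)^{-1/2}}) converges to 0 in P-probability as n → ∞. -/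
open MeasureTheory ProbabilityTheory Finset Filter Set


lemma auc_pair_identDistrib {Ω : Type*} [MeasurableSpace Ω] (P : Measure Ω) [IsProbabilityMeasure P]
    (U V : ℕ → Ω → ℝ) (hU : ∀ i, Measurable (U i)) (hV : ∀ j, Measurable (V j))
    (hUid : ∀ i, IdentDistrib (U i) (U 0) P P) (hVid : ∀ j, IdentDistrib (V j) (V 0) P P)
    (hindep : iIndepFun (Sum.elim U V) P)
    (i j : ℕ) : IdentDistrib (fun x => (U i x, V j x)) (fun x => (U 0 x, V 0 x)) P P := by
  have hUV : ∀ a b : ℕ, IndepFun (U a) (V b) P := fun a b =>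
    hindep.indepFun (show (Sum.inl a : ℕ ⊕ ℕ) ≠ Sum.inr b by simp)
  refine ⟨((hU i).prodMk (hV j)).aemeasurable, ((hU 0).prodMk (hV 0)).aemeasurable, ?_⟩
  rw [(indepFun_iff_map_prod_eq_prod_map_map (hU i).aemeasurable (hV j).aemeasurable).1 (hUV i j),
      (indepFun_iff_map_prod_eq_prod_map_map (hU 0).aemeasurable (hV 0).aemeasurable).1 (hUV 0 0),
      (hUid i).map_eq, (hVid j).map_eq]

lemma auc_second_moment {Ω : Type*} [MeasurableSpace Ω] (P : Measure Ω) [IsProbabilityMeasure P]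
    (U V : ℕ → Ω → ℝ) (hU : ∀ i, Measurable (U i)) (hV : ∀ j, Measurable (V j))
    (hUid : ∀ i, IdentDistrib (U i) (U 0) P P) (hVid : ∀ j, IdentDistrib (V j) (V 0) P P)
    (hindep : iIndepFun (Sum.elim U V) P)
    (θstar : ℝ) (hθstar : θstar = (P {x | U 0 x > V 0 x}).toReal)
    (M n : ℕ) (hn : 1 ≤ n) (hMn : n ≤ M) :
    ∫ x, ((1 / (M * n : ℝ)) * ∑ i ∈ range M, ∑ j ∈ range n,
        (if U i x > V j x then (1:ℝ) else 0) - θstar)^2 ∂P ≤ 2 / (n:ℝ) := by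
  have hM1 : 1 ≤ M := le_trans hn hMn
  have hnR : (1:ℝ) ≤ (n:ℝ) := by exact_mod_cast hn
  have hMR : (n:ℝ) ≤ (M:ℝ) := by exact_mod_cast hMn
  have hMR1 : (1:ℝ) ≤ (M:ℝ) := le_trans hnR hMR
  set X : ℕ × ℕ → Ω → ℝ := fun p x => if U p.1 x > V p.2 x then 1 else 0 with hXdef
  have hXmeas : ∀ p, Measurable (X p) := fun p =>
    Measurable.ite (measurableSet_lt (hV p.2) (hU p.1)) measurable_const measurable_const
  have hX01 : ∀ p x, X p x ∈ Icc (0:ℝ) 1 := by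
    intro p x; simp only [hXdef]; split_ifs <;> norm_num
  have hXint : ∀ p, Integrable (X p) P := by
    intro p
    refine (integrable_const (1:ℝ)).mono' (hXmeas p).aestronglyMeasurable ?_
    filter_upwards with x
    rw [Real.norm_eq_abs, abs_le]
    constructor <;> [linarith [(hX01 p x).1]; exact (hX01 p x).2]
  have hθ0 : 0 ≤ θstar := by rw [hθstar]; exact ENNReal.toReal_nonneg
  have hθ1 : θstar ≤ 1 := by
    rw [hθstar]
    exact ENNReal.toReal_le_of_le_ofReal zero_le_one (by simpa using prob_le_one)
  -- expectation of X p is θstar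
  have hg : Measurable (fun p : ℝ × ℝ => if p.2 < p.1 then (1:ℝ) else 0) :=
    Measurable.ite (measurableSet_lt measurable_snd measurable_fst) measurable_const measurable_const
  have hEX : ∀ p, ∫ x, X p x ∂P = θstar := by
    intro p
    have hid := (auc_pair_identDistrib P U V hU hV hUid hVid hindep p.1 p.2).comp hg
    have h1 : ∫ x, X p x ∂P = ∫ x, X (0,0) x ∂P := hid.integral_eq
    rw [h1, hθstar]
    have h2 : ∀ x, X (0,0) x = Set.indicator {x | U 0 x > V 0 x} (fun _ => (1:ℝ)) x := by
      intro x
      simp only [hXdef, Set.indicator_apply, Set.mem_setOf_eq]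
    rw [integral_congr_ae (Filter.Eventually.of_forall h2),
      integral_indicator_const (1:ℝ) (measurableSet_lt (hV 0) (hU 0)), smul_eq_mul, mul_one]; rfl
  -- independence of X p and X q for disjoint indices
  have helim : ∀ k : ℕ ⊕ ℕ, Measurable (Sum.elim U V k) := by
    intro k; cases k with
    | inl i => exact hU i
    | inr j => exact hV j
  have hindepX : ∀ p q : ℕ × ℕ, p.1 ≠ q.1 → p.2 ≠ q.2 → IndepFun (X p) (X q) P := by
    intro p q h1 h2
    have h := hindep.indepFun_prodMk_prodMk helim
      (Sum.inl p.1) (Sum.inr p.2) (Sum.inl q.1) (Sum.inr q.2)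
      (by simp [h1]) (by simp) (by simp) (by simp [h2])
    exact h.comp hg hg
  -- centered variables
  set Y : ℕ × ℕ → Ω → ℝ := fun p x => X p x - θstar with hYdef
  have hYint : ∀ p, Integrable (Y p) P := fun p => (hXint p).sub (integrable_const θstar)
  have hYmeas : ∀ p, Measurable (Y p) := fun p => (hXmeas p).sub measurable_const
  have hYbdd : ∀ p x, |Y p x| ≤ 1 := by
    intro p x
    rw [abs_le]
    constructor <;> simp only [hYdef] <;>
      [linarith [(hX01 p x).1, hθ1]; linarith [(hX01 p x).2, hθ0]]
  have hEY : ∀ p, ∫ x, Y p x ∂P = 0 := by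
    intro p
    simp only [hYdef]
    rw [integral_sub (hXint p) (integrable_const θstar), hEX, integral_const]
    simp
  have hYprodint : ∀ p q, Integrable (fun x => Y p x * Y q x) P := by
    intro p q
    exact (hYint q).bdd_mul (c := 1) (hYmeas p).aestronglyMeasurable (Filter.Eventually.of_forall fun x => by
      rw [Real.norm_eq_abs]; exact hYbdd p x)
  have hcross0 : ∀ p q : ℕ × ℕ, p.1 ≠ q.1 → p.2 ≠ q.2 → ∫ x, Y p x * Y q x ∂P = 0 := by
    intro p q h1 h2
    have hind : IndepFun (Y p) (Y q) P :=
      (hindepX p q h1 h2).comp (measurable_id.sub measurable_const)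
        (measurable_id.sub measurable_const)
    have h := hind.integral_mul_eq_mul_integral (hYint p).aestronglyMeasurable (hYint q).aestronglyMeasurable
    show integral P (Y p * Y q) = 0
    rw [h, hEY, hEY, mul_zero]
  have hcross1 : ∀ p q : ℕ × ℕ, ∫ x, Y p x * Y q x ∂P ≤ 1 := by
    intro p q
    calc ∫ x, Y p x * Y q x ∂P ≤ ∫ _x, (1:ℝ) ∂P := by
          apply integral_mono (hYprodint p q) (integrable_const 1)
          intro x
          calc Y p x * Y q x ≤ |Y p x * Y q x| := le_abs_self _
            _ = |Y p x| * |Y q x| := abs_mul _ _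
            _ ≤ 1 := mul_le_one₀ (hYbdd p x) (abs_nonneg _) (hYbdd q x)
      _ = 1 := by simp
  -- expand the square
  set A : Finset (ℕ × ℕ) := range M ×ˢ range n with hAdef
  have hMn0 : (M:ℝ) * n ≠ 0 := by positivity
  have key : ∀ x, (1 / (M * n : ℝ)) * ∑ i ∈ range M, ∑ j ∈ range n,
      (if U i x > V j x then (1:ℝ) else 0) - θstar = (1 / (M * n : ℝ)) * ∑ p ∈ A, Y p x := by
    intro x
    have h1 : ∑ p ∈ A, Y p x = (∑ i ∈ range M, ∑ j ∈ range n,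
        (if U i x > V j x then (1:ℝ) else 0)) - (M * n : ℝ) * θstar := by
      simp only [hYdef, hXdef, hAdef, Finset.sum_sub_distrib, Finset.sum_const,
        Finset.card_product, Finset.card_range, nsmul_eq_mul, Finset.sum_product]
      push_cast
      ring
    rw [h1, mul_sub]
    have h2 : (1/((M:ℝ)*n)) * (((M:ℝ)*n)*θstar) = θstar := by field_simp
    rw [h2]
  have hsum_int : ∀ p : ℕ × ℕ, Integrable (fun x => ∑ q ∈ A, Y p x * Y q x) P :=
    fun p => integrable_finset_sum A (fun q _ => hYprodint p q)
  calc ∫ x, ((1 / (M * n : ℝ)) * ∑ i ∈ range M, ∑ j ∈ range n,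
        (if U i x > V j x then (1:ℝ) else 0) - θstar)^2 ∂P
      = ∫ x, (1/((M:ℝ)*n))^2 * (∑ p ∈ A, Y p x)^2 ∂P := by
        apply integral_congr_ae
        filter_upwards with x
        rw [key x, mul_pow]
    _ = (1/((M:ℝ)*n))^2 * ∫ x, (∑ p ∈ A, Y p x)^2 ∂P := integral_const_mul _ _
    _ = (1/((M:ℝ)*n))^2 * ∑ p ∈ A, ∑ q ∈ A, ∫ x, Y p x * Y q x ∂P := by
        congr 1
        have hexp : ∀ x, (∑ p ∈ A, Y p x)^2 = ∑ p ∈ A, ∑ q ∈ A, Y p x * Y q x := by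
          intro x; rw [sq, Finset.sum_mul_sum]
        rw [integral_congr_ae (Filter.Eventually.of_forall hexp),
          integral_finset_sum A (fun p _ => hsum_int p)]
        exact Finset.sum_congr rfl (fun p _ => integral_finset_sum A (fun q _ => hYprodint p q))
    _ ≤ (1/((M:ℝ)*n))^2 * ∑ p ∈ A, ∑ q ∈ A, (if p.1 = q.1 ∨ p.2 = q.2 then (1:ℝ) else 0) := by
        apply mul_le_mul_of_nonneg_left _ (by positivity)
        apply Finset.sum_le_sum; intro p _
        apply Finset.sum_le_sum; intro q _
        by_cases h : p.1 = q.1 ∨ p.2 = q.2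
        · rw [if_pos h]; exact hcross1 p q
        · push_neg at h
          rw [if_neg (by push_neg; exact h), hcross0 p q h.1 h.2]
    _ ≤ (1/((M:ℝ)*n))^2 * ∑ _p ∈ A, ((n:ℝ) + M) := by
        apply mul_le_mul_of_nonneg_left _ (by positivity)
        apply Finset.sum_le_sum; intro p _
        calc ∑ q ∈ A, (if p.1 = q.1 ∨ p.2 = q.2 then (1:ℝ) else 0)
            ≤ ∑ q ∈ A, ((if p.1 = q.1 then (1:ℝ) else 0) + (if p.2 = q.2 then (1:ℝ) else 0)) := by
              apply Finset.sum_le_sum; intro q _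
              by_cases h1 : p.1 = q.1 <;> by_cases h2 : p.2 = q.2 <;> simp [h1, h2]
          _ = (∑ q ∈ A, (if p.1 = q.1 then (1:ℝ) else 0))
              + ∑ q ∈ A, (if p.2 = q.2 then (1:ℝ) else 0) := Finset.sum_add_distrib
          _ ≤ (n:ℝ) + M := by
              have e1 : ∑ q ∈ A, (if p.1 = q.1 then (1:ℝ) else 0) ≤ (n:ℝ) := by
                rw [hAdef]
                simp only [Finset.sum_product]
                have h3 : ∀ i, ∑ _j ∈ range n, (if p.1 = i then (1:ℝ) else 0)
                    = (if p.1 = i then (n:ℝ) else 0) := by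
                  intro i; rw [Finset.sum_const, nsmul_eq_mul]; split_ifs <;> simp
                simp only [h3]
                rw [Finset.sum_ite_eq]
                split_ifs
                · exact le_refl _
                · positivity
              have e2 : ∑ q ∈ A, (if p.2 = q.2 then (1:ℝ) else 0) ≤ (M:ℝ) := by
                rw [hAdef]
                simp only [Finset.sum_product]
                have h4 : ∀ i, i ∈ range M → ∑ j ∈ range n,
                    (if p.2 = j then (1:ℝ) else 0) ≤ 1 := by
                  intro i _
                  rw [Finset.sum_ite_eq]
                  split_ifs <;> norm_num
                calc ∑ i ∈ range M, ∑ j ∈ range n, (if p.2 = j then (1:ℝ) else 0)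
                    ≤ ∑ _i ∈ range M, (1:ℝ) := Finset.sum_le_sum h4
                  _ = M := by simp
              linarith
    _ = (1/((M:ℝ)*n))^2 * (((M:ℝ)*n) * ((n:ℝ)+M)) := by
        have hcard : A.card = M * n := by simp [hAdef]
        rw [Finset.sum_const, hcard, nsmul_eq_mul]
        push_cast
        ring
    _ ≤ 2/(n:ℝ) := by
        have heq : (1/((M:ℝ)*n))^2 * (((M:ℝ)*n) * ((n:ℝ)+M)) = ((n:ℝ)+M)/((M:ℝ)*n) := by
          field_simp
        rw [heq, div_le_div_iff₀ (by positivity) (by positivity)]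
        nlinarith [hnR, hMR]


lemma gibbs_det_bound (c r t θs : ℝ) (hc : 0 < c) (ht : t ∈ Icc (0:ℝ) 1)
    (hr : 0 ≤ r) (hclose : |t - θs| ≤ r/2) :
    (∫ θ in Icc (0:ℝ) 1 ∩ {θ : ℝ | |θ - θs| > r}, Real.exp (-(c * (θ - t)^2))) /
      (∫ θ in Icc (0:ℝ) 1, Real.exp (-(c * (θ - t)^2))) ≤
    Real.exp 1 * (2 + Real.sqrt c) * Real.exp (-(c * r^2/4)) := by
  set f : ℝ → ℝ := fun θ => Real.exp (-(c * (θ - t)^2)) with hfdef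
  have hfcont : Continuous f := by
    apply Real.continuous_exp.comp
    exact ((continuous_const.mul ((continuous_id.sub continuous_const).pow 2))).neg
  have hfint : IntegrableOn f (Icc (0:ℝ) 1) := hfcont.integrableOn_Icc
  have hfpos : ∀ θ, 0 < f θ := fun θ => Real.exp_pos _
  set A : Set ℝ := Icc (0:ℝ) 1 ∩ {θ : ℝ | |θ - θs| > r} with hAdef
  have hAmeas : MeasurableSet A := measurableSet_Icc.inter
    ((isOpen_lt continuous_const ((continuous_id.sub continuous_const).abs)).measurableSet)
  have hAsub : A ⊆ Icc (0:ℝ) 1 := inter_subset_left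
  have hAvol : volume A ≤ 1 := by
    refine le_trans (measure_mono hAsub) ?_
    simp [Real.volume_Icc]
  -- numerator bound
  have hnum_pt : ∀ θ ∈ A, f θ ≤ Real.exp (-(c * r^2/4)) := by
    intro θ hθ
    have h1 : r < |θ - θs| := hθ.2
    have h2 : |θ - θs| ≤ |θ - t| + |t - θs| := abs_sub_le θ t θs
    have h3 : r/2 ≤ |θ - t| := by linarith
    have h4 : (r/2) * (r/2) ≤ |θ - t| * |θ - t| :=
      mul_self_le_mul_self (by positivity) h3
    rw [abs_mul_abs_self] at h4
    apply Real.exp_le_exp.2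
    nlinarith [mul_le_mul_of_nonneg_left h4 hc.le]
  have hnum : (∫ θ in A, f θ) ≤ Real.exp (-(c * r^2/4)) := by
    calc (∫ θ in A, f θ) ≤ ∫ _θ in A, Real.exp (-(c * r^2/4)) := by
          apply setIntegral_mono_on (hfint.mono_set hAsub) _ hAmeas hnum_pt
          exact integrableOn_const (lt_of_le_of_lt hAvol ENNReal.one_lt_top).ne
      _ = (volume A).toReal * Real.exp (-(c * r^2/4)) := by
          rw [setIntegral_const, smul_eq_mul]; rfl
      _ ≤ Real.exp (-(c * r^2/4)) := by
          apply mul_le_of_le_one_left (Real.exp_pos _).le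
          exact ENNReal.toReal_le_of_le_ofReal zero_le_one (by simpa using hAvol)
  -- denominator bound
  set δ : ℝ := min (1/2) (1/Real.sqrt c) with hδdef
  have hsc : 0 < Real.sqrt c := Real.sqrt_pos.2 hc
  have hδpos : 0 < δ := lt_min (by norm_num) (by positivity)
  have hδhalf : δ ≤ 1/2 := min_le_left _ _
  have hδsqrt : δ ≤ 1/Real.sqrt c := min_le_right _ _
  have hδsq : c * δ^2 ≤ 1 := by
    have h1 : δ^2 ≤ (1/Real.sqrt c)^2 := pow_le_pow_left₀ hδpos.le hδsqrt 2
    have h2 : (1/Real.sqrt c)^2 = 1/c := by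
      rw [div_pow, one_pow, Real.sq_sqrt hc.le]
    rw [h2] at h1
    calc c * δ^2 ≤ c * (1/c) := mul_le_mul_of_nonneg_left h1 hc.le
      _ = 1 := by field_simp
  obtain ⟨a, ha0, ha1, hamem⟩ : ∃ a, 0 ≤ a ∧ a + δ ≤ 1 ∧ ∀ θ ∈ Icc a (a+δ), |θ - t| ≤ δ := by
    by_cases htt : t ≤ 1/2
    · exact ⟨t, ht.1, by linarith, fun θ hθ => by
        rw [abs_le]; constructor <;> [linarith [hθ.1]; linarith [hθ.2]]⟩
    · refine ⟨t - δ, by linarith, by linarith [ht.2], fun θ hθ => ?_⟩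
      rw [abs_le]
      constructor <;> [linarith [hθ.1]; linarith [hθ.2, hδpos]]
  have hIsub : Icc a (a+δ) ⊆ Icc (0:ℝ) 1 := Icc_subset_Icc ha0 ha1
  have hf_lb : ∀ θ ∈ Icc a (a+δ), Real.exp (-1) ≤ f θ := by
    intro θ hθ
    apply Real.exp_le_exp.2
    have h1 : |θ - t| ≤ δ := hamem θ hθ
    have h2 : (θ - t)^2 ≤ δ^2 := by
      rw [← sq_abs]
      exact pow_le_pow_left₀ (abs_nonneg _) h1 2
    nlinarith [mul_le_mul_of_nonneg_left h2 hc.le]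
  have hden : δ * Real.exp (-1) ≤ ∫ θ in Icc (0:ℝ) 1, f θ := by
    calc δ * Real.exp (-1) = (volume (Icc a (a+δ))).toReal * Real.exp (-1) := by
          rw [Real.volume_Icc]
          congr 1
          rw [show a + δ - a = δ by ring, ENNReal.toReal_ofReal hδpos.le]
      _ = ∫ _θ in Icc a (a+δ), Real.exp (-1) := by rw [setIntegral_const, smul_eq_mul]; rfl
      _ ≤ ∫ θ in Icc a (a+δ), f θ := by
          apply setIntegral_mono_on _ (hfint.mono_set hIsub) measurableSet_Icc hf_lb
          exact integrableOn_const measure_Icc_lt_top.ne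
      _ ≤ ∫ θ in Icc (0:ℝ) 1, f θ := by
          apply setIntegral_mono_set hfint
            (Filter.Eventually.of_forall (fun θ => (hfpos θ).le))
            (HasSubset.Subset.eventuallyLE hIsub)
  have hdenpos : 0 < δ * Real.exp (-1) := by positivity
  have hnum0 : 0 ≤ ∫ θ in A, f θ := setIntegral_nonneg hAmeas (fun θ _ => (hfpos θ).le)
  calc (∫ θ in A, f θ) / (∫ θ in Icc (0:ℝ) 1, f θ)
      ≤ Real.exp (-(c * r^2/4)) / (δ * Real.exp (-1)) :=
        div_le_div₀ (Real.exp_pos _).le hnum (by positivity) hden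
    _ ≤ Real.exp 1 * (2 + Real.sqrt c) * Real.exp (-(c * r^2/4)) := by
        rw [div_eq_mul_inv, mul_inv,
          show (Real.exp (-1:ℝ))⁻¹ = Real.exp 1 by rw [Real.exp_neg, inv_inv]]
        have hδinv : δ⁻¹ ≤ 2 + Real.sqrt c := by
          rcases min_cases (1/2 : ℝ) (1/Real.sqrt c) with ⟨h, _⟩ | ⟨h, _⟩
          · rw [hδdef, h]; norm_num
          · rw [hδdef, h, one_div, inv_inv]; linarith
        calc Real.exp (-(c * r^2/4)) * (δ⁻¹ * Real.exp 1)
            ≤ Real.exp (-(c * r^2/4)) * ((2 + Real.sqrt c) * Real.exp 1) := by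
              apply mul_le_mul_of_nonneg_left _ (Real.exp_pos _).le
              exact mul_le_mul_of_nonneg_right hδinv (Real.exp_pos _).le
          _ = Real.exp 1 * (2 + Real.sqrt c) * Real.exp (-(c * r^2/4)) := by ring


lemma gibbs_B_tendsto (ω : ℝ) (hω : 0 < ω) (m : ℕ → ℕ) (hm : ∀ n, n ≤ m n)
    (K : ℕ → ℝ) (hK : Tendsto K atTop atTop) :
    Tendsto (fun n => Real.exp 1 * (2 + Real.sqrt (ω * m n * n)) *
      Real.exp (-(ω * m n * n * (K n / Real.sqrt n)^2 / 4))) atTop (nhds 0) := by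
  have hg0 : Tendsto (fun x : ℝ => Real.exp 1 * (2 + Real.sqrt ω * x) * Real.exp (-x))
      atTop (nhds 0) := by
    have h1 : Tendsto (fun x : ℝ => Real.exp (-x)) atTop (nhds 0) :=
      Real.tendsto_exp_neg_atTop_nhds_zero
    have h2 : Tendsto (fun x : ℝ => x * Real.exp (-x)) atTop (nhds 0) := by
      simpa using Real.tendsto_pow_mul_exp_neg_atTop_nhds_zero 1
    have h3 := (h1.const_mul (2 * Real.exp 1)).add
      (h2.const_mul (Real.exp 1 * Real.sqrt ω))
    simp only [mul_zero, add_zero] at h3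
    apply h3.congr
    intro x
    ring
  have hmtend : Tendsto (fun n => (m n : ℝ)) atTop atTop :=
    tendsto_natCast_atTop_atTop.comp (tendsto_atTop_mono hm tendsto_id)
  have hgm : Tendsto (fun n => Real.exp 1 * (2 + Real.sqrt ω * (m n : ℝ)) *
      Real.exp (-(m n : ℝ))) atTop (nhds 0) := hg0.comp hmtend
  apply tendsto_of_tendsto_of_tendsto_of_le_of_le' tendsto_const_nhds hgm
  · filter_upwards with n
    positivity
  · filter_upwards [hK.eventually_ge_atTop (2 / Real.sqrt ω), eventually_ge_atTop 1]
      with n hKn hn1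
    have hsω : 0 < Real.sqrt ω := Real.sqrt_pos.2 hω
    have hnR : (1:ℝ) ≤ (n:ℝ) := by exact_mod_cast hn1
    have hmR : (n:ℝ) ≤ (m n : ℝ) := by exact_mod_cast hm n
    have hmpos : (0:ℝ) < (m n : ℝ) := by linarith
    have hK0 : 0 ≤ K n := le_trans (by positivity) hKn
    -- first factor
    have hfac : Real.sqrt (ω * m n * n) ≤ Real.sqrt ω * (m n : ℝ) := by
      rw [mul_assoc, Real.sqrt_mul hω.le]
      apply mul_le_mul_of_nonneg_left _ (Real.sqrt_nonneg _)
      calc Real.sqrt ((m n : ℝ) * n) ≤ Real.sqrt ((m n : ℝ) * m n) :=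
            Real.sqrt_le_sqrt (by nlinarith)
        _ = (m n : ℝ) := Real.sqrt_mul_self hmpos.le
    -- second factor
    have hK2 : 4 / ω ≤ (K n)^2 := by
      have h := mul_self_le_mul_self (by positivity) hKn
      have h2 : (2 / Real.sqrt ω) * (2 / Real.sqrt ω) = 4 / ω := by
        rw [div_mul_div_comm, Real.mul_self_sqrt hω.le]
        norm_num
      rw [h2] at h
      nlinarith
    have hexp : (m n : ℝ) ≤ ω * m n * n * (K n / Real.sqrt n)^2 / 4 := by
      have hsq : (K n / Real.sqrt n)^2 = (K n)^2 / (n:ℝ) := by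
        rw [div_pow, Real.sq_sqrt (by positivity : (0:ℝ) ≤ (n:ℝ))]
      rw [hsq]
      have heq : ω * (m n : ℝ) * n * ((K n)^2 / (n:ℝ)) / 4
          = (m n : ℝ) * (ω * (K n)^2 / 4) := by
        field_simp
      rw [heq]
      have h1 : 1 ≤ ω * (K n)^2 / 4 := by
        have := mul_le_mul_of_nonneg_left hK2 hω.le
        rw [mul_div_cancel₀ _ (ne_of_gt hω)] at this
        linarith
      nlinarith
    have hexp2 : Real.exp (-(ω * m n * n * (K n / Real.sqrt n)^2 / 4))
        ≤ Real.exp (-(m n : ℝ)) := Real.exp_le_exp.2 (by linarith)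
    apply mul_le_mul _ hexp2 (Real.exp_pos _).le (by positivity)
    apply mul_le_mul_of_nonneg_left _ (Real.exp_pos _).le
    linarith

/-- Gibbs posterior concentration for the AUC.  Let `U, V` be
independent with true AUC `θ* = P(U > V)`, let `U₁,…,U_m` and `V₁,…,V_n` be
i.i.d. copies, mutually independent, `θ̂_{m,n}` the Mann–Whitney statistic, and
`Π_{m,n}` the Gibbs posterior on `[0,1]` with flat prior and fixed learning
rate `ω > 0`, i.e. with density proportional to
`θ ↦ exp(-ω m n (θ - θ̂_{m,n})²)`.  With `n = m ∧ n` (i.e. `n ≤ m_n`) and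
`m, n → ∞`, for any sequence `K_n → ∞`, the random variable
`Π_{m,n}({θ ∈ [0,1] : |θ - θ*| > K_n (m ∧ n)^{-1/2}})` tends to `0` in
`P`-probability as `n → ∞`. -/
theorem gibbs_posterior_auc_concentration
    {Ω : Type*} [MeasurableSpace Ω] (P : Measure Ω) [IsProbabilityMeasure P]
    (U V : ℕ → Ω → ℝ)
    (hU : ∀ i, Measurable (U i)) (hV : ∀ j, Measurable (V j))
    (hUid : ∀ i, IdentDistrib (U i) (U 0) P P)
    (hVid : ∀ j, IdentDistrib (V j) (V 0) P P)
    (hindep : iIndepFun (Sum.elim U V) P)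
    (θstar : ℝ) (hθstar : θstar = (P {x | U 0 x > V 0 x}).toReal)
    (ω : ℝ) (hω : 0 < ω)
    (m : ℕ → ℕ) (hm : ∀ n, n ≤ m n)
    (θhat : ℕ → Ω → ℝ)
    (hθhat : ∀ n x, θhat n x = (1 / (m n * n : ℝ)) *
      ∑ i ∈ range (m n), ∑ j ∈ range n, (if U i x > V j x then (1 : ℝ) else 0))
    (Gibbs : ℕ → ℝ → Set ℝ → ℝ)
    (hGibbs : ∀ (n : ℕ) (t : ℝ) (S : Set ℝ), Gibbs n t S =
      (∫ θ in Icc (0 : ℝ) 1 ∩ S, Real.exp (-(ω * m n * n * (θ - t) ^ 2))) /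
      (∫ θ in Icc (0 : ℝ) 1, Real.exp (-(ω * m n * n * (θ - t) ^ 2))))
    (K : ℕ → ℝ) (hK : Tendsto K atTop atTop) :
    ∀ ε > (0 : ℝ),
      Tendsto (fun n => P {x | ε ≤
          Gibbs n (θhat n x)
            {θ : ℝ | |θ - θstar| > K n / Real.sqrt (min (m n) n)}})
        atTop (nhds 0) := by
  intro ε hε
  have hθ0 : 0 ≤ θstar := by rw [hθstar]; exact ENNReal.toReal_nonneg
  have hθ1 : θstar ≤ 1 := by
    rw [hθstar]
    exact ENNReal.toReal_le_of_le_ofReal zero_le_one (by simpa using prob_le_one)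
  have hθhatmeas : ∀ n, Measurable (θhat n) := by
    intro n
    have heq : θhat n = fun x => (1 / (m n * n : ℝ)) *
        ∑ i ∈ range (m n), ∑ j ∈ range n, (if U i x > V j x then (1:ℝ) else 0) :=
      funext (hθhat n)
    rw [heq]
    exact (Finset.measurable_sum _ (fun i _ => Finset.measurable_sum _ (fun j _ =>
      Measurable.ite (measurableSet_lt (hV j) (hU i)) measurable_const
        measurable_const))).const_mul _
  have hθhat01 : ∀ n, 1 ≤ n → ∀ x, θhat n x ∈ Icc (0:ℝ) 1 := by
    intro n hn x
    have hM1 : 1 ≤ m n := le_trans hn (hm n)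
    have hnR : (1:ℝ) ≤ (n:ℝ) := by exact_mod_cast hn
    have hMR : (1:ℝ) ≤ (m n : ℝ) := by exact_mod_cast hM1
    rw [hθhat]
    constructor
    · apply mul_nonneg (by positivity)
      apply Finset.sum_nonneg; intro i _
      apply Finset.sum_nonneg; intro j _
      split_ifs <;> norm_num
    · have hsum : ∑ i ∈ range (m n), ∑ j ∈ range n, (if U i x > V j x then (1:ℝ) else 0)
          ≤ (m n : ℝ) * n := by
        calc ∑ i ∈ range (m n), ∑ j ∈ range n, (if U i x > V j x then (1:ℝ) else 0)
            ≤ ∑ _i ∈ range (m n), ∑ _j ∈ range n, (1:ℝ) :=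
              Finset.sum_le_sum (fun i _ => Finset.sum_le_sum (fun j _ => by
                split_ifs <;> norm_num))
          _ = (m n : ℝ) * n := by simp
      calc (1 / ((m n : ℝ) * n)) * ∑ i ∈ range (m n), ∑ j ∈ range n,
            (if U i x > V j x then (1:ℝ) else 0)
          ≤ (1 / ((m n : ℝ) * n)) * ((m n : ℝ) * n) :=
            mul_le_mul_of_nonneg_left hsum (by positivity)
        _ = 1 := by field_simp
  have hB0 : Tendsto (fun n => Real.exp 1 * (2 + Real.sqrt (ω * m n * n)) *
      Real.exp (-(ω * m n * n * (K n / Real.sqrt n)^2 / 4))) atTop (nhds 0) :=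
    gibbs_B_tendsto ω hω m hm K hK
  have hKpos : ∀ᶠ n in atTop, 0 < K n := hK.eventually_gt_atTop 0
  have hBsmall : ∀ᶠ n in atTop, Real.exp 1 * (2 + Real.sqrt (ω * m n * n)) *
      Real.exp (-(ω * m n * n * (K n / Real.sqrt n)^2 / 4)) < ε :=
    hB0.eventually_lt_const hε
  have hmain : ∀ᶠ n in atTop, P {x | ε ≤ Gibbs n (θhat n x)
      {θ : ℝ | |θ - θstar| > K n / Real.sqrt (min (m n) n)}}
      ≤ ENNReal.ofReal (8 / (K n)^2) := by
    filter_upwards [hKpos, hBsmall, eventually_ge_atTop 1] with n hKn hBn hn1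
    have hnR : (1:ℝ) ≤ (n:ℝ) := by exact_mod_cast hn1
    have hnpos : (0:ℝ) < (n:ℝ) := by linarith
    have hmpos : (0:ℝ) < (m n : ℝ) := by
      have : (1:ℕ) ≤ m n := le_trans hn1 (hm n)
      exact_mod_cast Nat.lt_of_lt_of_le Nat.zero_lt_one this
    have hsqn : 0 < Real.sqrt (n:ℝ) := Real.sqrt_pos.2 hnpos
    have hrpos : 0 < K n / Real.sqrt n := div_pos hKn hsqn
    have hSeq : {θ : ℝ | |θ - θstar| > K n / Real.sqrt (min (m n) n)}
        = {θ : ℝ | |θ - θstar| > K n / Real.sqrt n} := by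
      rw [min_eq_right (show ((n:ℝ)) ≤ ((m n : ℕ):ℝ) by exact_mod_cast hm n)]
    have hsub : {x | ε ≤ Gibbs n (θhat n x)
        {θ : ℝ | |θ - θstar| > K n / Real.sqrt (min (m n) n)}}
        ⊆ {x | (K n / Real.sqrt n) / 2 < |θhat n x - θstar|} := by
      intro x hx
      simp only [mem_setOf_eq] at hx ⊢
      by_contra hcon
      push_neg at hcon
      have hgb := gibbs_det_bound (ω * m n * n) (K n / Real.sqrt n) (θhat n x) θstar
        (by positivity) (hθhat01 n hn1 x) hrpos.le hcon
      rw [hGibbs, hSeq] at hx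
      exact absurd hx (not_le.2 (lt_of_le_of_lt hgb hBn))
    -- Chebyshev
    have hfmeas : Measurable (fun x => (θhat n x - θstar)^2) :=
      ((hθhatmeas n).sub measurable_const).pow_const 2
    have hfbdd : ∀ x, (θhat n x - θstar)^2 ≤ 1 := by
      intro x
      have h1 := (hθhat01 n hn1 x).1
      have h2 := (hθhat01 n hn1 x).2
      nlinarith
    have hfint : Integrable (fun x => (θhat n x - θstar)^2) P := by
      refine (integrable_const (1:ℝ)).mono' hfmeas.aestronglyMeasurable ?_
      filter_upwards with x
      rw [Real.norm_eq_abs, abs_of_nonneg (sq_nonneg _)]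
      exact hfbdd x
    have hmom : ∫ x, (θhat n x - θstar)^2 ∂P ≤ 2 / (n:ℝ) := by
      have h := auc_second_moment P U V hU hV hUid hVid hindep θstar hθstar
        (m n) n hn1 (hm n)
      have heq : (fun x => (θhat n x - θstar)^2) = fun x =>
          ((1 / (m n * n : ℝ)) * ∑ i ∈ range (m n), ∑ j ∈ range n,
            (if U i x > V j x then (1:ℝ) else 0) - θstar)^2 :=
        funext (fun x => by rw [hθhat])
      rw [heq]
      exact h
    set t : ℝ := (K n / Real.sqrt n) / 2 with htdef
    have htpos : 0 < t := by positivity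
    have hmarkov := mul_meas_ge_le_integral_of_nonneg
      (Filter.Eventually.of_forall (fun x => sq_nonneg (θhat n x - θstar))) hfint (t^2)
    have hPt : (P {x | t^2 ≤ (θhat n x - θstar)^2}).toReal ≤ 8 / (K n)^2 := by
      have h2 : t^2 * (P {x | t^2 ≤ (θhat n x - θstar)^2}).toReal ≤ 2 / (n:ℝ) :=
        le_trans hmarkov hmom
      have ht2 : t^2 = (K n)^2 / (4 * n) := by
        rw [htdef, div_pow, div_pow, Real.sq_sqrt hnpos.le]
        field_simp
        ring
      calc (P {x | t^2 ≤ (θhat n x - θstar)^2}).toReal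
          ≤ (2 / (n:ℝ)) / t^2 := by
            rw [le_div_iff₀ (by positivity : (0:ℝ) < t^2)]
            nlinarith
        _ = 8 / (K n)^2 := by
            rw [ht2]
            rw [div_div_div_eq]
            have hKne : K n ≠ 0 := ne_of_gt hKn
            field_simp
            ring
    calc P {x | ε ≤ Gibbs n (θhat n x)
          {θ : ℝ | |θ - θstar| > K n / Real.sqrt (min (m n) n)}}
        ≤ P {x | t < |θhat n x - θstar|} := measure_mono hsub
      _ ≤ P {x | t^2 ≤ (θhat n x - θstar)^2} := by
          apply measure_mono
          intro x hx
          simp only [mem_setOf_eq] at hx ⊢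
          calc t^2 ≤ |θhat n x - θstar|^2 := by
                apply pow_le_pow_left₀ htpos.le hx.le
            _ = (θhat n x - θstar)^2 := sq_abs _
      _ = ENNReal.ofReal ((P {x | t^2 ≤ (θhat n x - θstar)^2}).toReal) :=
          (ENNReal.ofReal_toReal (measure_ne_top _ _)).symm
      _ ≤ ENNReal.ofReal (8 / (K n)^2) := ENNReal.ofReal_le_ofReal hPt
  -- squeeze
  have hKsq : Tendsto (fun n => (K n)^2) atTop atTop := by
    have := hK.atTop_mul_atTop₀ hK
    apply this.congr
    intro n
    rw [sq]
  have h8 : Tendsto (fun n => 8 / (K n)^2) atTop (nhds 0) :=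
    Tendsto.div_atTop tendsto_const_nhds hKsq
  have h8' : Tendsto (fun n => ENNReal.ofReal (8 / (K n)^2)) atTop (nhds 0) := by
    have := ENNReal.tendsto_ofReal h8
    simpa using this
  apply tendsto_of_tendsto_of_tendsto_of_le_of_le' tendsto_const_nhds h8'
  · exact Filter.Eventually.of_forall (fun n => zero_le)
  · exact hmain
end

section
/- Let U and V be independent real-valued random variables with true AUC θ* = P(U > V), let U_1,…,U_m and V_1,…,V_n be i.i.d. copies of U and V respectively, all mutually independent, and let θ̂_{m,n} = (mn)^{-1} Σ_{i=1}^m Σ_{j=1}^n 1(U_i > V_j). Then Var(θ̂_{m,n}) ≤ θ*(1 − θ*)(m + n)/(m n). -/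
open MeasureTheory ProbabilityTheory Finset

lemma sum_ite_diag_aux (N : ℕ) (c : ℝ) :
    ∑ i ∈ range N, ∑ k ∈ range N, (if i = k then c else 0) = (N : ℝ) * c := by
  have h : ∀ i ∈ range N, ∑ k ∈ range N, (if i = k then c else 0) = c := by
    intro i hi
    rw [Finset.sum_ite_eq]
    simp [Finset.mem_range.mp hi]
  rw [Finset.sum_congr rfl h, Finset.sum_const, Finset.card_range, nsmul_eq_mul]

/-- For mutually independent samples `U₁,…,U_m` i.i.d. as `U` and
`V₁,…,V_n` i.i.d. as `V`, with true AUC `θ* = P(U > V)`, the Mann–Whitney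
statistic satisfies `Var(θ̂_{m,n}) ≤ θ*(1 - θ*)(m + n)/(mn)`. -/
theorem mann_whitney_variance_bound
    {Ω : Type*} [MeasurableSpace Ω] (P : Measure Ω) [IsProbabilityMeasure P]
    (U V : ℕ → Ω → ℝ)
    (hU : ∀ i, Measurable (U i)) (hV : ∀ j, Measurable (V j))
    (hUid : ∀ i, IdentDistrib (U i) (U 0) P P)
    (hVid : ∀ j, IdentDistrib (V j) (V 0) P P)
    (hindep : iIndepFun (m := fun _ : ℕ ⊕ ℕ => Real.measurableSpace) (Sum.elim U V) P)
    (m n : ℕ) (hm : 0 < m) (hn : 0 < n)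
    (θstar : ℝ) (hθstar : θstar = (P {ω | U 0 ω > V 0 ω}).toReal)
    (θhat : Ω → ℝ)
    (hθhat : ∀ ω, θhat ω = (1 / (m * n : ℝ)) *
      ∑ i ∈ range m, ∑ j ∈ range n, (if U i ω > V j ω then (1 : ℝ) else 0)) :
    variance θhat P ≤ θstar * (1 - θstar) * (m + n : ℝ) / (m * n : ℝ) := by
  classical
  set A : ℕ → ℕ → Set Ω := fun i j => {ω | V j ω < U i ω} with hAdef
  have hA : ∀ i j, MeasurableSet (A i j) := fun i j => measurableSet_lt (hV j) (hU i)
  set X : ℕ → ℕ → Ω → ℝ := fun i j ω => if V j ω < U i ω then 1 else 0 with hXdef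
  have hXind : ∀ i j, X i j = (A i j).indicator (fun _ => (1:ℝ)) := by
    intro i j; funext ω; simp [Set.indicator_apply, hXdef, hAdef]
  have hXmeas : ∀ i j, Measurable (X i j) := fun i j =>
    Measurable.ite (hA i j) measurable_const measurable_const
  have hXint : ∀ i j, Integrable (X i j) P := by
    intro i j; rw [hXind]; exact (integrable_const 1).indicator (hA i j)
  have hXmem : ∀ i j, MemLp (X i j) 2 P := by
    intro i j; rw [hXind]; exact (memLp_const (1:ℝ)).indicator (hA i j)
  have hX01 : ∀ i j ω, 0 ≤ X i j ω ∧ X i j ω ≤ 1 := by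
    intro i j ω; simp only [hXdef]; split_ifs <;> norm_num
  have hXmul : ∀ i j k l, (fun ω => X i j ω * X k l ω)
      = (A i j ∩ A k l).indicator (fun _ => (1:ℝ)) := by
    intro i j k l; funext ω
    by_cases h1 : ω ∈ A i j <;> by_cases h2 : ω ∈ A k l <;>
      simp_all [Set.indicator_apply, hXdef, hAdef]
  have hmul_int : ∀ i j k l, Integrable (fun ω => X i j ω * X k l ω) P := by
    intro i j k l; rw [hXmul]
    exact (integrable_const 1).indicator ((hA i j).inter (hA k l))
  -- the expectation of each indicator is θstar
  have hfmeas : ∀ s : ℕ ⊕ ℕ, Measurable (Sum.elim U V s) := by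
    rintro (i | j); exacts [hU i, hV j]
  have hlaw : ∀ i j, P.map (fun ω => (U i ω, V j ω)) = P.map (fun ω => (U 0 ω, V 0 ω)) := by
    intro i j
    have h1 : IndepFun (U i) (V j) P :=
      hindep.indepFun (show (Sum.inl i : ℕ ⊕ ℕ) ≠ Sum.inr j by simp)
    have h0 : IndepFun (U 0) (V 0) P :=
      hindep.indepFun (show (Sum.inl 0 : ℕ ⊕ ℕ) ≠ Sum.inr 0 by simp)
    rw [(indepFun_iff_map_prod_eq_prod_map_map (hU i).aemeasurable (hV j).aemeasurable).mp h1,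
      (indepFun_iff_map_prod_eq_prod_map_map (hU 0).aemeasurable (hV 0).aemeasurable).mp h0,
      (hUid i).map_eq, (hVid j).map_eq]
  have hSlt : MeasurableSet {p : ℝ × ℝ | p.2 < p.1} :=
    measurableSet_lt measurable_snd measurable_fst
  have hprob : ∀ i j, P (A i j) = P (A 0 0) := by
    have key : ∀ i j, P (A i j) = P.map (fun ω => (U i ω, V j ω)) {p : ℝ × ℝ | p.2 < p.1} := by
      intro i j
      rw [Measure.map_apply ((hU i).prodMk (hV j)) hSlt]
      rfl
    intro i j
    rw [key i j, key 0 0, hlaw i j]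
  have hθ01 : 0 ≤ θstar ∧ θstar ≤ 1 := by
    constructor
    · rw [hθstar]; exact ENNReal.toReal_nonneg
    · rw [hθstar]
      have h := prob_le_one (μ := P) (s := {ω | U 0 ω > V 0 ω})
      have h2 := ENNReal.toReal_mono (by simp) h
      simpa using h2
  have hθ : ∀ i j, ∫ ω, X i j ω ∂P = θstar := by
    intro i j
    rw [hXind, integral_indicator_const (1:ℝ) (hA i j), measureReal_def, hprob i j, hθstar]
    simp only [smul_eq_mul, mul_one]
    rfl
  -- independence of the indicators for disjoint index pairs
  have hRmeas : Measurable (fun p : ℝ × ℝ => if p.2 < p.1 then (1:ℝ) else 0) :=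
    Measurable.ite hSlt measurable_const measurable_const
  have hindep2 : ∀ i j k l, i ≠ k → j ≠ l → IndepFun (X i j) (X k l) P := by
    intro i j k l hik hjl
    have h := hindep.indepFun_prodMk_prodMk hfmeas
      (Sum.inl i) (Sum.inr j) (Sum.inl k) (Sum.inr l)
      (by simp [hik]) (by simp) (by simp) (by simp [hjl])
    exact h.comp hRmeas hRmeas
  have hmul_eq : ∀ i j k l, i ≠ k → j ≠ l →
      ∫ ω, X i j ω * X k l ω ∂P = θstar * θstar := by
    intro i j k l hik hjl
    rw [(hindep2 i j k l hik hjl).integral_fun_mul_eq_mul_integral (hXmeas i j).aestronglyMeasurable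
      (hXmeas k l).aestronglyMeasurable, hθ, hθ]
  have hmul_le : ∀ i j k l, ∫ ω, X i j ω * X k l ω ∂P ≤ θstar := by
    intro i j k l
    calc ∫ ω, X i j ω * X k l ω ∂P ≤ ∫ ω, X i j ω ∂P := by
          refine integral_mono (hmul_int i j k l) (hXint i j) fun ω => ?_
          have h1 := hX01 i j ω; have h2 := hX01 k l ω
          nlinarith [h1.1, h1.2, h2.1, h2.2]
      _ = θstar := hθ i j
  set c : ℝ := θstar * (1 - θstar) with hcdef
  have hc : 0 ≤ c := mul_nonneg hθ01.1 (by linarith [hθ01.2])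
  have key : ∀ i j k l, ∫ ω, X i j ω * X k l ω ∂P ≤
      θstar ^ 2 + ((if i = k then c else 0) + (if j = l then c else 0)) := by
    intro i j k l
    by_cases hik : i = k
    · have h := hmul_le i j k l
      split_ifs <;> simp only [hcdef] at * <;> nlinarith [hc]
    · by_cases hjl : j = l
      · have h := hmul_le i j k l
        split_ifs <;> simp only [hcdef] at * <;> nlinarith [hc]
      · rw [hmul_eq i j k l hik hjl]
        split_ifs <;> simp_all <;> nlinarith [hc]
  -- set up the sum
  set S : Ω → ℝ := fun ω => ∑ i ∈ range m, ∑ j ∈ range n, X i j ω with hSdef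
  have hSmem : MemLp S 2 P := by
    have hS' : S = ∑ i ∈ range m, ∑ j ∈ range n, X i j := by
      funext ω; simp [hSdef, Finset.sum_apply]
    rw [hS']
    exact memLp_finset_sum' _ fun i _ => memLp_finset_sum' _ fun j _ => hXmem i j
  have hθhat' : θhat = ((m * n : ℝ))⁻¹ • S := by
    funext ω
    rw [hθhat ω]
    simp [hSdef, smul_eq_mul, one_div, hXdef]
  have hIS : ∫ ω, S ω ∂P = (m : ℝ) * n * θstar := by
    simp only [hSdef]
    rw [integral_finset_sum _ fun i _ => integrable_finset_sum _ fun j _ => hXint i j]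
    have h : ∀ i ∈ range m, ∫ ω, ∑ j ∈ range n, X i j ω ∂P = (n : ℝ) * θstar := by
      intro i _
      rw [integral_finset_sum _ fun j _ => hXint i j]
      simp [hθ i, mul_comm]
    rw [Finset.sum_congr rfl h]
    simp; ring
  have hsq : ∀ ω, S ω ^ 2 = ∑ i ∈ range m, ∑ k ∈ range m, ∑ j ∈ range n, ∑ l ∈ range n,
      X i j ω * X k l ω := by
    intro ω
    simp only [hSdef]
    rw [sq, Finset.sum_mul_sum]
    refine Finset.sum_congr rfl fun i _ => Finset.sum_congr rfl fun k _ => ?_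
    rw [Finset.sum_mul_sum]
  have hIS2 : ∫ ω, S ω ^ 2 ∂P = ∑ i ∈ range m, ∑ k ∈ range m, ∑ j ∈ range n, ∑ l ∈ range n,
      ∫ ω, X i j ω * X k l ω ∂P := by
    simp_rw [hsq]
    rw [integral_finset_sum _ fun i _ => integrable_finset_sum _ fun k _ =>
      integrable_finset_sum _ fun j _ => integrable_finset_sum _ fun l _ => hmul_int i j k l]
    refine Finset.sum_congr rfl fun i _ => ?_
    rw [integral_finset_sum _ fun k _ =>
      integrable_finset_sum _ fun j _ => integrable_finset_sum _ fun l _ => hmul_int i j k l]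
    refine Finset.sum_congr rfl fun k _ => ?_
    rw [integral_finset_sum _ fun j _ => integrable_finset_sum _ fun l _ => hmul_int i j k l]
    refine Finset.sum_congr rfl fun j _ => ?_
    rw [integral_finset_sum _ fun l _ => hmul_int i j k l]
  have hsumbound : ∑ i ∈ range m, ∑ k ∈ range m, ∑ j ∈ range n, ∑ l ∈ range n,
      (θstar ^ 2 + ((if i = k then c else 0) + (if j = l then c else 0)))
      = (m:ℝ)^2 * n^2 * θstar^2 + ((m:ℝ) * n^2 * c + (m:ℝ)^2 * n * c) := by
    simp only [Finset.sum_add_distrib, Finset.sum_const, Finset.card_range, nsmul_eq_mul,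
      ← Finset.mul_sum, sum_ite_diag_aux]
    ring
  have hvarS : variance S P ≤ c * ((m:ℝ) * n * (m + n)) := by
    rw [variance_eq_sub hSmem]
    have h2 : (∫ ω, (S ^ 2) ω ∂P) = ∫ ω, S ω ^ 2 ∂P := by simp
    have hb : ∫ ω, S ω ^ 2 ∂P ≤ (m:ℝ)^2 * n^2 * θstar^2 + ((m:ℝ) * n^2 * c + (m:ℝ)^2 * n * c) := by
      rw [hIS2, ← hsumbound]
      refine Finset.sum_le_sum fun i _ => Finset.sum_le_sum fun k _ =>
        Finset.sum_le_sum fun j _ => Finset.sum_le_sum fun l _ => key i j k l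
    calc (∫ ω, (S ^ 2) ω ∂P) - (∫ ω, S ω ∂P) ^ 2
        ≤ ((m:ℝ)^2 * n^2 * θstar^2 + ((m:ℝ) * n^2 * c + (m:ℝ)^2 * n * c))
            - ((m:ℝ) * n * θstar)^2 := by
          rw [h2, hIS]; linarith [hb]
      _ = c * ((m:ℝ) * n * (m + n)) := by rw [hcdef]; ring
  -- conclude
  have hmn : (0:ℝ) < (m:ℝ) * n := by positivity
  rw [hθhat', variance_smul]
  calc ((m * n : ℝ))⁻¹ ^ 2 * variance S P
      ≤ ((m * n : ℝ))⁻¹ ^ 2 * (c * ((m:ℝ) * n * (m + n))) := by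
        exact mul_le_mul_of_nonneg_left hvarS (by positivity)
    _ = θstar * (1 - θstar) * (m + n : ℝ) / (m * n : ℝ) := by
        rw [hcdef]; field_simp
end

section
/- Let U and V be independent real-valued random variables with true AUC θ* = P(U > V). For each m, n let U_1,…,U_m and V_1,…,V_n be i.i.d. copies of U and V respectively, all mutually independent, let θ̂_{m,n} = (mn)^{-1} Σ_{i=1}^m Σ_{j=1}^n 1(U_i > V_j), and let Π_{m,n} be the Gibbs posterior with flat prior and learning-rate sequence ω_n > 0, i.e. the probability measure on [0,1] with density proportional to θ ↦ exp(−ω_n m n (θ − θ̂_{m,n})²). Assume without loss of generality n = m ∧ n, that m, n → ∞, and that ω_n (m ∨ n) → ∞ (i.e. ω_n vanishes more slowly than (m ∨ n)^{-1}). Then for any sequence K_n → ∞, Π_{m,n}({θ ∈ [0,1] : |θ − θ*| > K_n (m ∧ n)^{-1/2}}) converges to 0 in P-probability as n → ∞. -/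
/-!
On the event `|θ̂ - θ*| ≤ r / 2`, with `r = K (m ∧ n)^{-1/2}`, the Gibbs posterior gives the set
`{|θ - θ*| > r}` mass at most `e √(2π) exp (-ω m n r² / 8) = e √(2π) exp (-ω (m ∨ n) K² / 8)`:
the numerator is a Gaussian tail of size `exp (-ω m n r² / 8) √(2π / (ω m n))`, and the
normalising constant is at least `e⁻¹ (ω m n)^{-1/2}`, since `[0, 1]` contains an interval of
length `(ω m n)^{-1/2}` containing `θ̂`. This bound tends to `0`. The complementary event has
probability at most `8 / K²` by Chebyshev's inequality, because
`E (θ̂ - θ*)² ≤ 1 / m + 1 / n`: expanding the square of the centred double sum, the products of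
kernel terms whose index pairs differ in both coordinates are independent and centred, so only
`m n (m + n)` bounded terms survive.
-/

open MeasureTheory ProbabilityTheory Finset Filter Set Real

theorem exp_neg_one_div_sqrt_le_integral_Icc (σ t : ℝ) (hσ : 1 ≤ σ) (ht : t ∈ Icc (0 : ℝ) 1) :
    exp (-1) / √σ ≤ ∫ θ in Icc (0 : ℝ) 1, exp (-(σ * (θ - t) ^ 2)) := by
  set δ := 1 / √σ
  have hσ0 : 0 < σ := by linarith
  have hδ0 : 0 < δ := by positivity
  have hδ1 : δ ≤ 1 := by
    simpa [δ] using inv_le_one_of_one_le₀ (one_le_sqrt.mpr hσ)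
  have hσδ : σ * δ ^ 2 = 1 := by
    simp only [δ, div_pow, one_pow, sq_sqrt hσ0.le]; field_simp
  -- an interval of length `δ` inside `[0, 1]` that contains `t`
  set a := min t (1 - δ)
  have ha0 : 0 ≤ a := le_min ht.1 (by linarith)
  have ha1 : a + δ ≤ 1 := by linarith [min_le_right t (1 - δ)]
  have haI : Icc a (a + δ) ⊆ Icc 0 1 := Icc_subset_Icc ha0 ha1
  have hclose : ∀ θ ∈ Icc a (a + δ), σ * (θ - t) ^ 2 ≤ 1 := by
    intro θ hθ
    have hta : a ≤ t := min_le_left _ _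
    have htaδ : t ≤ a + δ := by
      rcases le_total t (1 - δ) with h | h
      · simp only [a, min_eq_left h]; linarith
      · simp only [a, min_eq_right h]; linarith [ht.2]
    have hθt : (θ - t) ^ 2 ≤ δ ^ 2 := by
      rw [sq_le_sq, abs_of_pos hδ0, abs_le]; constructor <;> linarith [hθ.1, hθ.2]
    calc σ * (θ - t) ^ 2 ≤ σ * δ ^ 2 := by gcongr
      _ = 1 := hσδ
  have hint : IntegrableOn (fun θ : ℝ => exp (-(σ * (θ - t) ^ 2))) (Icc 0 1) :=
    (by fun_prop : Continuous fun θ : ℝ => exp (-(σ * (θ - t) ^ 2))).integrableOn_Icc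
  calc exp (-1) / √σ = exp (-1) * volume.real (Icc a (a + δ)) := by
        rw [Real.volume_real_Icc_of_le (by linarith), add_sub_cancel_left, div_eq_mul_one_div]
    _ ≤ ∫ θ in Icc a (a + δ), exp (-(σ * (θ - t) ^ 2)) :=
        setIntegral_ge_of_const_le_real measurableSet_Icc measure_Icc_lt_top.ne
          (fun θ hθ => exp_le_exp.mpr (by linarith [hclose θ hθ])) (hint.mono_set haI)
    _ ≤ ∫ θ in Icc 0 1, exp (-(σ * (θ - t) ^ 2)) :=
        setIntegral_mono_set hint (.of_forall fun _ => (exp_pos _).le) haI.eventuallyLE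

theorem setIntegral_exp_neg_mul_sq_le (σ t ρ : ℝ) {s : Set ℝ} (hσ : 0 < σ) (hs : MeasurableSet s)
    (hρ : ∀ θ ∈ s, ρ ≤ (θ - t) ^ 2) :
    ∫ θ in s, exp (-(σ * (θ - t) ^ 2)) ≤ exp (-(σ * ρ / 2)) * √(2 * π / σ) := by
  have hg : Integrable fun θ : ℝ => exp (-(σ * ρ / 2)) * exp (-(σ / 2) * (θ - t) ^ 2) :=
    ((integrable_exp_neg_mul_sq (half_pos hσ)).comp_sub_right t).const_mul _
  calc ∫ θ in s, exp (-(σ * (θ - t) ^ 2))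
      ≤ ∫ θ in s, exp (-(σ * ρ / 2)) * exp (-(σ / 2) * (θ - t) ^ 2) := by
        refine setIntegral_mono_on ?_ hg.integrableOn hs fun θ hθ => ?_
        · simpa only [neg_mul] using
            ((integrable_exp_neg_mul_sq hσ).comp_sub_right t).integrableOn
        · rw [← exp_add, exp_le_exp]; nlinarith [hρ θ hθ]
    _ ≤ ∫ θ, exp (-(σ * ρ / 2)) * exp (-(σ / 2) * (θ - t) ^ 2) :=
        setIntegral_le_integral hg (.of_forall fun _ => by positivity)
    _ = exp (-(σ * ρ / 2)) * √(2 * π / σ) := by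
        rw [integral_const_mul, integral_sub_right_eq_self (fun θ => exp (-(σ / 2) * θ ^ 2)) t,
          integral_gaussian]
        congr 2; field_simp

noncomputable def gibbsMass (σ t : ℝ) (S : Set ℝ) : ℝ :=
  (∫ θ in Icc (0 : ℝ) 1 ∩ S, exp (-(σ * (θ - t) ^ 2))) /
    ∫ θ in Icc (0 : ℝ) 1, exp (-(σ * (θ - t) ^ 2))

theorem gibbsMass_tail_le (σ t θ₀ r : ℝ) (hσ : 1 ≤ σ) (ht : t ∈ Icc (0 : ℝ) 1)
    (hclose : |t - θ₀| ≤ r / 2) :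
    gibbsMass σ t {θ | r < |θ - θ₀|} ≤ exp 1 * √(2 * π) * exp (-(σ * r ^ 2 / 8)) := by
  have hσ0 : 0 < σ := by linarith
  have hfar : ∀ θ ∈ Icc (0 : ℝ) 1 ∩ {θ | r < |θ - θ₀|}, r ^ 2 / 4 ≤ (θ - t) ^ 2 := by
    rintro θ ⟨-, hθ⟩
    have : r / 2 ≤ |θ - t| := by linarith [abs_sub_le θ t θ₀, hθ.out]
    nlinarith [sq_abs (θ - t), abs_nonneg (t - θ₀)]
  have hnum := setIntegral_exp_neg_mul_sq_le σ t (r ^ 2 / 4) hσ0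
    (measurableSet_Icc.inter (measurableSet_lt measurable_const
      (measurable_id.sub_const θ₀).abs)) hfar
  calc gibbsMass σ t {θ | r < |θ - θ₀|}
      ≤ (exp (-(σ * (r ^ 2 / 4) / 2)) * √(2 * π / σ)) / (exp (-1) / √σ) :=
        div_le_div₀ (by positivity) hnum (by positivity)
          (exp_neg_one_div_sqrt_le_integral_Icc σ t hσ ht)
    _ = exp 1 * √(2 * π) * exp (-(σ * r ^ 2 / 8)) := by
        rw [sqrt_div' _ hσ0.le, exp_neg 1]
        field_simp
        ring_nf

theorem measure_le_abs_le_ofReal_integral_sq_div {Ω : Type*} [MeasurableSpace Ω] {μ : Measure Ω}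
    [IsFiniteMeasure μ] {X : Ω → ℝ} (hX : Integrable (fun x => X x ^ 2) μ) {c : ℝ} (hc : 0 < c) :
    μ {x | c ≤ |X x|} ≤ ENNReal.ofReal ((∫ x, X x ^ 2 ∂μ) / c ^ 2) := by
  have hset : {x | c ≤ |X x|} = {x | c ^ 2 ≤ X x ^ 2} := by
    ext x
    change c ≤ |X x| ↔ c ^ 2 ≤ X x ^ 2
    rw [← sq_abs (X x), sq_le_sq₀ hc.le (abs_nonneg _)]
  rw [hset, ← ofReal_measureReal]
  refine ENNReal.ofReal_le_ofReal ?_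
  rw [le_div_iff₀ (by positivity), mul_comm]
  exact mul_meas_ge_le_integral_of_nonneg (.of_forall fun x => sq_nonneg _) hX _

theorem integral_sq_sum_sum_le {Ω : Type*} [MeasurableSpace Ω] (μ : Measure Ω)
    [IsProbabilityMeasure μ] (Y : ℕ → ℕ → Ω → ℝ) (hYm : ∀ i j, AEStronglyMeasurable (Y i j) μ)
    (hY : ∀ i j x, |Y i j x| ≤ 1)
    (horth : ∀ i j k l, i ≠ k → j ≠ l → ∫ x, Y i j x * Y k l x ∂μ = 0) (M N : ℕ) :
    ∫ x, (∑ i ∈ range M, ∑ j ∈ range N, Y i j x) ^ 2 ∂μ ≤ M * N * (M + N) := by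
  set Q := range M ×ˢ range N
  have hprod_le : ∀ i j k l x, ‖Y i j x * Y k l x‖ ≤ 1 := fun i j k l x => by
    rw [norm_mul]; exact mul_le_one₀ (hY i j x) (norm_nonneg _) (hY k l x)
  have hint : ∀ i j k l, Integrable (fun x => Y i j x * Y k l x) μ := fun i j k l =>
    .of_bound ((hYm i j).mul (hYm k l)) 1 (.of_forall (hprod_le i j k l))
  have hcov : ∀ i j k l, ∫ x, Y i j x * Y k l x ∂μ ≤
      (if i = k then 1 else 0) + (if j = l then 1 else 0) := by
    intro i j k l
    have h1 : ∫ x, Y i j x * Y k l x ∂μ ≤ 1 := by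
      have := norm_integral_le_of_norm_le_const (μ := μ) (.of_forall (hprod_le i j k l))
      rw [probReal_univ, mul_one] at this
      exact (le_abs_self _).trans this
    by_cases hik : i = k
    · rw [if_pos hik]; split_ifs <;> linarith
    by_cases hjl : j = l
    · rwa [if_neg hik, if_pos hjl, zero_add]
    · simp [hik, hjl, horth i j k l hik hjl]
  have hsq : ∀ x, (∑ i ∈ range M, ∑ j ∈ range N, Y i j x) ^ 2 =
      ∑ p ∈ Q, ∑ q ∈ Q, Y p.1 p.2 x * Y q.1 q.2 x := fun x => by
    rw [sq, ← Finset.sum_product', Finset.sum_mul_sum]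
  calc ∫ x, (∑ i ∈ range M, ∑ j ∈ range N, Y i j x) ^ 2 ∂μ
      = ∑ p ∈ Q, ∑ q ∈ Q, ∫ x, Y p.1 p.2 x * Y q.1 q.2 x ∂μ := by
        simp_rw [hsq]
        rw [integral_finsetSum _ fun p _ => integrable_finsetSum _ fun q _ => hint ..]
        exact Finset.sum_congr rfl fun p _ => integral_finsetSum _ fun q _ => hint ..
    _ ≤ ∑ i ∈ range M, ∑ j ∈ range N, ∑ k ∈ range M, ∑ l ∈ range N,
          ((if i = k then 1 else 0) + (if j = l then 1 else 0)) := by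
        simp only [Q, Finset.sum_product]
        gcongr with i _ j _ k _ l _
        exact hcov i j k l
    _ = M * N * (M + N) := by
        simp +contextual [Finset.sum_add_distrib, Finset.sum_ite_eq]
        ring

noncomputable def mannWhitney {Ω : Type*} (U V : ℕ → Ω → ℝ) (M N : ℕ) (x : Ω) : ℝ :=
  (1 / (M * N : ℝ)) * ∑ i ∈ range M, ∑ j ∈ range N, (if U i x > V j x then (1 : ℝ) else 0)

noncomputable def aucKernel (θ₀ : ℝ) (p : ℝ × ℝ) : ℝ := (if p.1 > p.2 then 1 else 0) - θ₀

theorem measurable_aucKernel (θ₀ : ℝ) : Measurable (aucKernel θ₀) :=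
  (Measurable.ite (measurableSet_lt measurable_snd measurable_fst) measurable_const
    measurable_const).sub_const θ₀

theorem abs_aucKernel_le {θ₀ : ℝ} (hθ₀ : θ₀ ∈ Icc (0 : ℝ) 1) (p : ℝ × ℝ) :
    |aucKernel θ₀ p| ≤ 1 := by
  unfold aucKernel
  split_ifs <;> rw [abs_le] <;> constructor <;> linarith [hθ₀.1, hθ₀.2]

section MannWhitney

variable {Ω : Type*} {U V : ℕ → Ω → ℝ}

theorem mannWhitney_mem_Icc (M N : ℕ) (x : Ω) : mannWhitney U V M N x ∈ Icc (0 : ℝ) 1 := by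
  have hsum : ∑ i ∈ range M, ∑ j ∈ range N, (if U i x > V j x then (1 : ℝ) else 0) ≤ M * N := by
    calc _ ≤ ∑ i ∈ range M, ∑ j ∈ range N, (1 : ℝ) := by gcongr; split_ifs <;> norm_num
      _ = M * N := by simp
  refine ⟨by unfold mannWhitney; positivity, ?_⟩
  rcases Nat.eq_zero_or_pos (M * N) with h | h
  · simp [mannWhitney, ← Nat.cast_mul, h]
  · rw [mannWhitney, one_div_mul_eq_div, div_le_one (by exact_mod_cast h)]
    exact hsum

theorem mannWhitney_sub_eq {M N : ℕ} (hM : 0 < M) (hN : 0 < N) (θ₀ : ℝ) (x : Ω) :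
    mannWhitney U V M N x - θ₀ =
      (1 / (M * N : ℝ)) * ∑ i ∈ range M, ∑ j ∈ range N, aucKernel θ₀ (U i x, V j x) := by
  simp only [mannWhitney, aucKernel, Finset.sum_sub_distrib, Finset.sum_const, Finset.card_range,
    nsmul_eq_mul]
  field_simp

variable [MeasurableSpace Ω] {P : Measure Ω} [IsProbabilityMeasure P]

theorem measurable_mannWhitney (hU : ∀ i, Measurable (U i)) (hV : ∀ j, Measurable (V j))
    (M N : ℕ) : Measurable (mannWhitney U V M N) :=
  Measurable.const_mul (Finset.measurable_sum _ fun i _ => Finset.measurable_sum _ fun j _ =>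
    Measurable.ite (measurableSet_lt (hV j) (hU i)) measurable_const measurable_const) _

theorem integral_aucKernel_eq_zero (hU : ∀ i, Measurable (U i)) (hV : ∀ j, Measurable (V j))
    (hUid : ∀ i, IdentDistrib (U i) (U 0) P P) (hVid : ∀ j, IdentDistrib (V j) (V 0) P P)
    (hindep : iIndepFun (Sum.elim U V) P) (i j : ℕ) :
    ∫ x, aucKernel (P.real {x | U 0 x > V 0 x}) (U i x, V j x) ∂P = 0 := by
  set θ₀ := P.real {x | U 0 x > V 0 x}
  have hpair : IdentDistrib (fun x => (U i x, V j x)) (fun x => (U 0 x, V 0 x)) P P :=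
    (hUid i).prodMk (hVid j) (hindep.indepFun (i := .inl i) (j := .inr j) (by simp))
      (hindep.indepFun (i := .inl 0) (j := .inr 0) (by simp))
  have hind : ∀ x, aucKernel θ₀ (U 0 x, V 0 x) = {x | U 0 x > V 0 x}.indicator 1 x - θ₀ := by
    intro x; simp [aucKernel, Set.indicator_apply]
  refine ((hpair.comp (measurable_aucKernel θ₀)).integral_eq).trans ?_
  change ∫ x, aucKernel θ₀ (U 0 x, V 0 x) ∂P = 0
  have hs : MeasurableSet {x | U 0 x > V 0 x} := measurableSet_lt (hV 0) (hU 0)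
  have hint : Integrable ({x | U 0 x > V 0 x}.indicator (1 : Ω → ℝ)) P :=
    (integrable_const 1).indicator hs
  simp_rw [hind]
  rw [integral_sub hint (integrable_const θ₀), integral_indicator_one hs]
  simp [θ₀]

theorem integral_aucKernel_mul_eq_zero (hU : ∀ i, Measurable (U i)) (hV : ∀ j, Measurable (V j))
    (hUid : ∀ i, IdentDistrib (U i) (U 0) P P) (hVid : ∀ j, IdentDistrib (V j) (V 0) P P)
    (hindep : iIndepFun (Sum.elim U V) P) {i j k l : ℕ} (hik : i ≠ k) (hjl : j ≠ l) :
    ∫ x, aucKernel (P.real {x | U 0 x > V 0 x}) (U i x, V j x) *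
      aucKernel (P.real {x | U 0 x > V 0 x}) (U k x, V l x) ∂P = 0 := by
  set θ₀ := P.real {x | U 0 x > V 0 x}
  have hmeas : ∀ a, Measurable (Sum.elim U V a) := by rintro (a | a) <;> simp [hU, hV]
  have hindep_pairs : IndepFun (fun x => (U i x, V j x)) (fun x => (U k x, V l x)) P :=
    hindep.indepFun_prodMk_prodMk hmeas (.inl i) (.inr j) (.inl k) (.inr l)
      (by simpa using hik) (by simp) (by simp) (by simpa using hjl)
  have hmeas_pair : ∀ a b, Measurable fun x => aucKernel θ₀ (U a x, V b x) := fun a b =>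
    (measurable_aucKernel θ₀).comp ((hU a).prodMk (hV b))
  refine ((hindep_pairs.comp (measurable_aucKernel θ₀) (measurable_aucKernel θ₀))
    |>.integral_fun_mul_eq_mul_integral (hmeas_pair i j).aestronglyMeasurable
      (hmeas_pair k l).aestronglyMeasurable).trans ?_
  change (∫ x, aucKernel θ₀ (U i x, V j x) ∂P) * _ = 0
  rw [integral_aucKernel_eq_zero hU hV hUid hVid hindep, zero_mul]

theorem integral_sq_mannWhitney_sub_le (hU : ∀ i, Measurable (U i)) (hV : ∀ j, Measurable (V j))
    (hUid : ∀ i, IdentDistrib (U i) (U 0) P P) (hVid : ∀ j, IdentDistrib (V j) (V 0) P P)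
    (hindep : iIndepFun (Sum.elim U V) P) {M N : ℕ} (hM : 0 < M) (hN : 0 < N) :
    ∫ x, (mannWhitney U V M N x - P.real {x | U 0 x > V 0 x}) ^ 2 ∂P ≤ 1 / M + 1 / N := by
  set θ₀ := P.real {x | U 0 x > V 0 x}
  have hθ₀ : θ₀ ∈ Icc (0 : ℝ) 1 := ⟨measureReal_nonneg, measureReal_le_one⟩
  have hsum := integral_sq_sum_sum_le P (fun i j x => aucKernel θ₀ (U i x, V j x))
    (fun i j => ((measurable_aucKernel θ₀).comp ((hU i).prodMk (hV j))).aestronglyMeasurable)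
    (fun i j x => abs_aucKernel_le hθ₀ _)
    (fun i j k l hik hjl => integral_aucKernel_mul_eq_zero hU hV hUid hVid hindep hik hjl) M N
  calc ∫ x, (mannWhitney U V M N x - θ₀) ^ 2 ∂P
      = (1 / (M * N : ℝ)) ^ 2 *
          ∫ x, (∑ i ∈ range M, ∑ j ∈ range N, aucKernel θ₀ (U i x, V j x)) ^ 2 ∂P := by
        simp_rw [mannWhitney_sub_eq hM hN, mul_pow]
        exact integral_const_mul _ _
    _ ≤ (1 / (M * N : ℝ)) ^ 2 * (M * N * (M + N)) := by gcongr
    _ = 1 / M + 1 / N := by field_simp; ring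

theorem measure_le_abs_mannWhitney_sub_le (hU : ∀ i, Measurable (U i))
    (hV : ∀ j, Measurable (V j)) (hUid : ∀ i, IdentDistrib (U i) (U 0) P P)
    (hVid : ∀ j, IdentDistrib (V j) (V 0) P P) (hindep : iIndepFun (Sum.elim U V) P)
    {M N : ℕ} (hM : 0 < M) (hN : 0 < N) {c : ℝ} (hc : 0 < c) :
    P {x | c ≤ |mannWhitney U V M N x - P.real {x | U 0 x > V 0 x}|} ≤
      ENNReal.ofReal ((1 / M + 1 / N) / c ^ 2) := by
  set θ₀ := P.real {x | U 0 x > V 0 x}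
  have hsq_int : Integrable (fun x => (mannWhitney U V M N x - θ₀) ^ 2) P := by
    refine MemLp.integrable_sq (.of_bound
      ((measurable_mannWhitney hU hV M N).sub_const θ₀).aestronglyMeasurable 1 (.of_forall ?_))
    intro x
    exact abs_sub_le_of_nonneg_of_le (mannWhitney_mem_Icc M N x).1 (mannWhitney_mem_Icc M N x).2
      measureReal_nonneg measureReal_le_one
  refine (measure_le_abs_le_ofReal_integral_sq_div hsq_int hc).trans (ENNReal.ofReal_le_ofReal ?_)
  gcongr
  exact integral_sq_mannWhitney_sub_le hU hV hUid hVid hindep hM hN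

theorem measure_gibbsMass_tail_ge_le (hU : ∀ i, Measurable (U i)) (hV : ∀ j, Measurable (V j))
    (hUid : ∀ i, IdentDistrib (U i) (U 0) P P) (hVid : ∀ j, IdentDistrib (V j) (V 0) P P)
    (hindep : iIndepFun (Sum.elim U V) P) {M N : ℕ} (hM : 0 < M) (hN : 0 < N) {ω K ε : ℝ}
    (hω : 1 ≤ ω * max (M : ℝ) N) (hK : 0 < K)
    (hε : exp 1 * √(2 * π) * exp (-(ω * max (M : ℝ) N * K ^ 2 / 8)) < ε) :
    P {x | ε ≤ gibbsMass (ω * M * N) (mannWhitney U V M N x)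
      {θ | K / √(min (M : ℝ) N) < |θ - P.real {x | U 0 x > V 0 x}|}} ≤
      ENNReal.ofReal (8 / K ^ 2) := by
  set θ₀ := P.real {x | U 0 x > V 0 x}
  set r := K / √(min (M : ℝ) N)
  have hmin : (1 : ℝ) ≤ min (M : ℝ) N := le_min (by exact_mod_cast hM) (by exact_mod_cast hN)
  have hr2 : r ^ 2 = K ^ 2 / min (M : ℝ) N := by
    rw [div_pow, sq_sqrt (by positivity)]
  have hσ_eq : ω * M * N = ω * max (M : ℝ) N * min (M : ℝ) N := by
    rw [mul_assoc, mul_assoc, mul_comm (max _ _), min_mul_max]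
  have hσ : 1 ≤ ω * M * N := by rw [hσ_eq]; nlinarith
  have hsub : {x | ε ≤ gibbsMass (ω * M * N) (mannWhitney U V M N x) {θ | r < |θ - θ₀|}} ⊆
      {x | r / 2 ≤ |mannWhitney U V M N x - θ₀|} := by
    intro x hx
    by_contra hfar
    have := gibbsMass_tail_le _ _ θ₀ r hσ (mannWhitney_mem_Icc M N x) (not_le.mp hfar).le
    have hexp : ω * M * N * r ^ 2 = ω * max (M : ℝ) N * K ^ 2 := by
      rw [hσ_eq, hr2]; field_simp
    rw [hexp] at this
    exact absurd hx.out (not_le.mpr (this.trans_lt hε))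
  have h2 : 1 / (M : ℝ) + 1 / N ≤ 2 / min (M : ℝ) N := by
    have hpos : 0 < min (M : ℝ) N := by linarith
    have hM' := one_div_le_one_div_of_le hpos (min_le_left (M : ℝ) N)
    have hN' := one_div_le_one_div_of_le hpos (min_le_right (M : ℝ) N)
    linarith [show 2 / min (M : ℝ) N = 1 / min (M : ℝ) N + 1 / min (M : ℝ) N by ring]
  calc _ ≤ P {x | r / 2 ≤ |mannWhitney U V M N x - θ₀|} := measure_mono hsub
    _ ≤ ENNReal.ofReal ((1 / M + 1 / N) / (r / 2) ^ 2) :=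
        measure_le_abs_mannWhitney_sub_le hU hV hUid hVid hindep hM hN (by positivity)
    _ ≤ ENNReal.ofReal (8 / K ^ 2) := by
        refine ENNReal.ofReal_le_ofReal ?_
        calc _ ≤ (2 / min (M : ℝ) N) / (r / 2) ^ 2 := by gcongr
          _ = 8 / K ^ 2 := by rw [div_pow, hr2]; field_simp; ring

end MannWhitney

theorem gibbs_posterior_auc_concentration_vanishing_rate_general
    {Ω : Type*} [MeasurableSpace Ω] (P : Measure Ω) [IsProbabilityMeasure P]
    (U V : ℕ → Ω → ℝ)
    (hU : ∀ i, Measurable (U i)) (hV : ∀ j, Measurable (V j))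
    (hUid : ∀ i, IdentDistrib (U i) (U 0) P P)
    (hVid : ∀ j, IdentDistrib (V j) (V 0) P P)
    (hindep : iIndepFun (Sum.elim U V) P)
    (θstar : ℝ) (hθstar : θstar = (P {x | U 0 x > V 0 x}).toReal)
    (m : ℕ → ℕ) (hm : ∀ n, n ≤ m n)
    (ω : ℕ → ℝ)
    (hrate : Tendsto (fun n => ω n * (max (m n) n : ℝ)) atTop atTop)
    (θhat : ℕ → Ω → ℝ)
    (hθhat : ∀ n x, θhat n x = (1 / (m n * n : ℝ)) *
      ∑ i ∈ range (m n), ∑ j ∈ range n, (if U i x > V j x then (1 : ℝ) else 0))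
    (Gibbs : ℕ → ℝ → Set ℝ → ℝ)
    (hGibbs : ∀ (n : ℕ) (t : ℝ) (S : Set ℝ), Gibbs n t S =
      (∫ θ in Icc (0 : ℝ) 1 ∩ S, Real.exp (-(ω n * m n * n * (θ - t) ^ 2))) /
      (∫ θ in Icc (0 : ℝ) 1, Real.exp (-(ω n * m n * n * (θ - t) ^ 2))))
    (K : ℕ → ℝ) (hK : Tendsto K atTop atTop) :
    ∀ ε > (0 : ℝ),
      Tendsto (fun n => P {x | ε ≤
          Gibbs n (θhat n x)
            {θ : ℝ | |θ - θstar| > K n / Real.sqrt (min (m n) n)}})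
        atTop (nhds 0) := by
  intro ε hε
  subst hθstar
  have hK2 : Tendsto (fun n => K n ^ 2) atTop atTop := by
    simpa only [sq] using hK.atTop_mul_atTop₀ hK
  have hsmall : ∀ᶠ n in atTop,
      exp 1 * √(2 * π) * exp (-(ω n * max (m n : ℝ) n * K n ^ 2 / 8)) < ε := by
    have hexp : Tendsto (fun n => exp (-(ω n * max (m n : ℝ) n * K n ^ 2 / 8))) atTop (nhds 0) :=
      tendsto_exp_atBot.comp (tendsto_neg_atTop_atBot.comp
        ((hrate.atTop_mul_atTop₀ hK2).atTop_div_const (by norm_num)))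
    simpa using (hexp.const_mul (exp 1 * √(2 * π))).eventually (gt_mem_nhds (by rwa [mul_zero]))
  have hbound : Tendsto (fun n => ENNReal.ofReal (8 / K n ^ 2)) atTop (nhds 0) := by
    simpa using ENNReal.tendsto_ofReal (tendsto_const_nhds.div_atTop hK2)
  refine tendsto_of_tendsto_of_tendsto_of_le_of_le' tendsto_const_nhds hbound
    (.of_forall fun _ => zero_le) ?_
  filter_upwards [eventually_ge_atTop 1, hrate.eventually_ge_atTop 1, hK.eventually_gt_atTop 0,
    hsmall] with n hn hωn hKn hεn
  have hGibbs_eq : ∀ x S, Gibbs n (θhat n x) S =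
      gibbsMass (ω n * m n * n) (mannWhitney U V (m n) n x) S := fun x S => by
    rw [hGibbs, hθhat]; rfl
  simp_rw [hGibbs_eq]
  exact measure_gibbsMass_tail_ge_le hU hV hUid hVid hindep (hn.trans (hm n)) hn hωn hKn hεn

/-- Gibbs posterior concentration for the AUC with a vanishing
learning-rate sequence.  Let `U, V` be independent with true AUC
`θ* = P(U > V)`, `U₁,…,U_m` and `V₁,…,V_n` i.i.d. copies, mutually
independent, `θ̂_{m,n}` the Mann–Whitney statistic, and `Π_{m,n}` the Gibbs
posterior on `[0,1]` with flat prior and learning rates `ω_n > 0`, i.e. with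
density proportional to `θ ↦ exp(-ω_n m n (θ - θ̂_{m,n})²)`.  With `n = m ∧ n`
(i.e. `n ≤ m_n`), `m, n → ∞`, and `ω_n (m ∨ n) → ∞` (so `ω_n` vanishes more
slowly than `(m ∨ n)⁻¹`), for any sequence `K_n → ∞`, the random variable
`Π_{m,n}({θ ∈ [0,1] : |θ - θ*| > K_n (m ∧ n)^{-1/2}})` tends to `0` in
`P`-probability as `n → ∞`. -/
theorem gibbs_posterior_auc_concentration_vanishing_rate
    {Ω : Type*} [MeasurableSpace Ω] (P : Measure Ω) [IsProbabilityMeasure P]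
    (U V : ℕ → Ω → ℝ)
    (hU : ∀ i, Measurable (U i)) (hV : ∀ j, Measurable (V j))
    (hUid : ∀ i, IdentDistrib (U i) (U 0) P P)
    (hVid : ∀ j, IdentDistrib (V j) (V 0) P P)
    (hindep : iIndepFun (Sum.elim U V) P)
    (θstar : ℝ) (hθstar : θstar = (P {x | U 0 x > V 0 x}).toReal)
    (m : ℕ → ℕ) (hm : ∀ n, n ≤ m n)
    (ω : ℕ → ℝ) (hω : ∀ n, 0 < ω n)
    (hrate : Tendsto (fun n => ω n * (max (m n) n : ℝ)) atTop atTop)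
    (θhat : ℕ → Ω → ℝ)
    (hθhat : ∀ n x, θhat n x = (1 / (m n * n : ℝ)) *
      ∑ i ∈ range (m n), ∑ j ∈ range n, (if U i x > V j x then (1 : ℝ) else 0))
    (Gibbs : ℕ → ℝ → Set ℝ → ℝ)
    (hGibbs : ∀ (n : ℕ) (t : ℝ) (S : Set ℝ), Gibbs n t S =
      (∫ θ in Icc (0 : ℝ) 1 ∩ S, Real.exp (-(ω n * m n * n * (θ - t) ^ 2))) /
      (∫ θ in Icc (0 : ℝ) 1, Real.exp (-(ω n * m n * n * (θ - t) ^ 2))))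
    (K : ℕ → ℝ) (hK : Tendsto K atTop atTop) :
    ∀ ε > (0 : ℝ),
      Tendsto (fun n => P {x | ε ≤
          Gibbs n (θhat n x)
            {θ : ℝ | |θ - θstar| > K n / Real.sqrt (min (m n) n)}})
        atTop (nhds 0) :=
  gibbs_posterior_auc_concentration_vanishing_rate_general P U V hU hV hUid hVid hindep θstar hθstar
    m hm ω hrate θhat hθhat Gibbs hGibbs K hK
end
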